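/- Let X be an m×s real matrix, σ > 0 with ‖X v‖ ≥ σ ‖v‖ for all v ∈ ℝˢ, and let Q̄ (m×s) and R̄ (s×s) satisfy R̄ᵀ R̄ = Xᵀ X + E and Q̄ R̄ = X + D with ‖E‖₂ < σ². Then ‖I_s − Q̄ᵀ Q̄‖₂ ≤ (‖E‖₂ + 2‖X‖₂‖D‖₂ + ‖D‖₂²) / (σ² − ‖E‖₂). -/

import Mathlib

/-!
Conjugating `M = I - Q̄ᵀQ̄` by `R̄` gives
`R̄ᵀ M R̄ = R̄ᵀR̄ - (Q̄R̄)ᵀ(Q̄R̄) = E - ((X + D)ᵀ(X + D) - XᵀX)`,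
whose norm is at most `‖E‖ + 2‖X‖‖D‖ + ‖D‖²`.
On the other hand `‖R̄v‖² = ‖Xv‖² + vᵀEv ≥ (σ² - ‖E‖)‖v‖²`, so `R̄` is invertible
with `‖R̄⁻¹‖² ≤ 1 / (σ² - ‖E‖)`, and `M = R̄⁻ᵀ (R̄ᵀ M R̄) R̄⁻¹` gives the bound.
-/

open Matrix
open scoped Matrix.Norms.L2Operator

namespace Matrix

variable {m n : Type*} [Fintype m] [Fintype n] [DecidableEq n]

lemma l2_opNorm_transpose [DecidableEq m] (A : Matrix m n ℝ) : ‖Aᵀ‖ = ‖A‖ := by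
  rw [← conjTranspose_eq_transpose_of_trivial, l2_opNorm_conjTranspose]

omit [DecidableEq n] in
lemma norm_sq_mulVec_eq_dotProduct (A : Matrix m n ℝ) (v : EuclideanSpace ℝ n) :
    ‖(EuclideanSpace.equiv m ℝ).symm (A *ᵥ v)‖ ^ 2 = v ⬝ᵥ (Aᵀ * A) *ᵥ v := by
  rw [← real_inner_self_eq_norm_sq, EuclideanSpace.inner_eq_star_dotProduct, ← mulVec_mulVec,
    dotProduct_mulVec, vecMul_transpose, dotProduct_comm]
  rfl

lemma abs_dotProduct_mulVec_le (A : Matrix n n ℝ) (v : EuclideanSpace ℝ n) :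
    |v ⬝ᵥ A *ᵥ v| ≤ ‖A‖ * ‖v‖ ^ 2 := by
  rw [← inner_toEuclideanCLM]
  calc |inner ℝ v (toEuclideanCLM (𝕜 := ℝ) A v)| ≤ ‖v‖ * ‖toEuclideanCLM (𝕜 := ℝ) A v‖ :=
        abs_real_inner_le_norm _ _
    _ ≤ ‖v‖ * (‖A‖ * ‖v‖) := by gcongr; exact (toEuclideanCLM (𝕜 := ℝ) A).le_opNorm v
    _ = ‖A‖ * ‖v‖ ^ 2 := by ring

lemma sqrt_mul_norm_le_norm_mulVec_of_transpose_mul_self_eq {R E : Matrix n n ℝ}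
    {X : Matrix m n ℝ} (hRX : Rᵀ * R = Xᵀ * X + E) {σ : ℝ} (hσ : 0 ≤ σ)
    (hX : ∀ v : EuclideanSpace ℝ n, σ * ‖v‖ ≤ ‖(EuclideanSpace.equiv m ℝ).symm (X *ᵥ v)‖)
    (v : EuclideanSpace ℝ n) :
    √(σ ^ 2 - ‖E‖) * ‖v‖ ≤ ‖(EuclideanSpace.equiv n ℝ).symm (R *ᵥ v)‖ := by
  have hXv : (σ * ‖v‖) ^ 2 ≤ ‖(EuclideanSpace.equiv m ℝ).symm (X *ᵥ v)‖ ^ 2 :=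
    pow_le_pow_left₀ (by positivity) (hX v) 2
  have hEv := neg_le_of_abs_le (abs_dotProduct_mulVec_le E v)
  have hRv : (σ ^ 2 - ‖E‖) * ‖v‖ ^ 2 ≤ ‖(EuclideanSpace.equiv n ℝ).symm (R *ᵥ v)‖ ^ 2 := by
    rw [norm_sq_mulVec_eq_dotProduct, hRX, add_mulVec, dotProduct_add,
      ← norm_sq_mulVec_eq_dotProduct]
    linarith
  calc √(σ ^ 2 - ‖E‖) * ‖v‖ = √((σ ^ 2 - ‖E‖) * ‖v‖ ^ 2) := by
        rw [Real.sqrt_mul' _ (by positivity), Real.sqrt_sq (norm_nonneg v)]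
    _ ≤ √(‖(EuclideanSpace.equiv n ℝ).symm (R *ᵥ v)‖ ^ 2) := Real.sqrt_le_sqrt hRv
    _ = _ := Real.sqrt_sq (norm_nonneg _)

section BoundedBelow

variable {A : Matrix n n ℝ} {τ : ℝ} (hτ : 0 < τ)
  (hA : ∀ v : EuclideanSpace ℝ n, τ * ‖v‖ ≤ ‖(EuclideanSpace.equiv n ℝ).symm (A *ᵥ v)‖)
include hτ hA

lemma isUnit_det_of_mul_norm_le_norm_mulVec : IsUnit A.det := by
  rw [isUnit_iff_ne_zero, Ne, ← exists_mulVec_eq_zero_iff]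
  rintro ⟨v, hv, hAv⟩
  have hpos : 0 < τ * ‖(EuclideanSpace.equiv n ℝ).symm v‖ :=
    mul_pos hτ (norm_pos_iff.2 (by simpa using hv))
  have hAv' := hA ((EuclideanSpace.equiv n ℝ).symm v)
  rw [show ((EuclideanSpace.equiv n ℝ).symm v).ofLp = v from rfl, hAv, map_zero,
    norm_zero] at hAv'
  linarith

lemma l2_opNorm_nonsing_inv_le_of_mul_norm_le_norm_mulVec : ‖A⁻¹‖ ≤ τ⁻¹ := by
  have hAA : A * A⁻¹ = 1 := mul_nonsing_inv A (isUnit_det_of_mul_norm_le_norm_mulVec hτ hA)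
  rw [← l2_opNorm_toEuclideanCLM]
  refine ContinuousLinearMap.opNorm_le_bound _ (inv_nonneg.2 hτ.le) fun w ↦ ?_
  rw [inv_mul_eq_div, le_div_iff₀' hτ]
  change τ * ‖(EuclideanSpace.equiv n ℝ).symm (A⁻¹ *ᵥ w)‖ ≤ ‖w‖
  simpa [mulVec_mulVec, hAA] using hA ((EuclideanSpace.equiv n ℝ).symm (A⁻¹ *ᵥ w))

end BoundedBelow

lemma l2_opNorm_le_nonsing_inv_sq_mul_transpose_mul_mul {R : Matrix n n ℝ} (hR : IsUnit R.det)
    (M : Matrix n n ℝ) : ‖M‖ ≤ ‖R⁻¹‖ ^ 2 * ‖Rᵀ * M * R‖ := by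
  have hM : M = R⁻¹ᵀ * (Rᵀ * M * R) * R⁻¹ := by
    rw [transpose_nonsing_inv, ← Matrix.mul_assoc, ← Matrix.mul_assoc,
      nonsing_inv_mul _ (isUnit_det_transpose R hR), Matrix.one_mul, Matrix.mul_assoc,
      mul_nonsing_inv _ hR, Matrix.mul_one]
  calc ‖M‖ = ‖R⁻¹ᵀ * (Rᵀ * M * R) * R⁻¹‖ := congrArg _ hM
    _ ≤ ‖R⁻¹ᵀ‖ * ‖Rᵀ * M * R‖ * ‖R⁻¹‖ :=
      (l2_opNorm_mul _ _).trans (by gcongr; exact l2_opNorm_mul _ _)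
    _ = ‖R⁻¹‖ ^ 2 * ‖Rᵀ * M * R‖ := by rw [l2_opNorm_transpose]; ring

lemma l2_opNorm_transpose_mul_self_add_sub_le [DecidableEq m] (X D : Matrix m n ℝ) :
    ‖(X + D)ᵀ * (X + D) - Xᵀ * X‖ ≤ 2 * ‖X‖ * ‖D‖ + ‖D‖ ^ 2 := by
  have hexp : (X + D)ᵀ * (X + D) - Xᵀ * X = Xᵀ * D + Dᵀ * X + Dᵀ * D := by
    rw [transpose_add, Matrix.add_mul, Matrix.mul_add, Matrix.mul_add]; abel
  have hnorm (A B : Matrix m n ℝ) : ‖Aᵀ * B‖ ≤ ‖A‖ * ‖B‖ := by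
    simpa only [l2_opNorm_transpose] using l2_opNorm_mul Aᵀ B
  rw [hexp]
  calc _ ≤ ‖Xᵀ * D‖ + ‖Dᵀ * X‖ + ‖Dᵀ * D‖ := norm_add₃_le
    _ ≤ ‖X‖ * ‖D‖ + ‖D‖ * ‖X‖ + ‖D‖ * ‖D‖ := by gcongr <;> apply hnorm
    _ = _ := by ring

end Matrix

/-- **Explicit-constant second-order loss-of-orthogonality bound (equation (4.7)).**
If `σ > 0` is a lower bound on the smallest singular value of `X`, `R̄ᵀ R̄ = Xᵀ X + E`,
`Q̄ R̄ = X + D`, and `‖E‖₂ < σ²`, then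
`‖I - Q̄ᵀ Q̄‖₂ ≤ (‖E‖₂ + 2 ‖X‖₂ ‖D‖₂ + ‖D‖₂²) / (σ² - ‖E‖₂)`. -/
theorem loss_of_orthogonality_explicit_bound (m s : ℕ)
    (X Qbar D : Matrix (Fin m) (Fin s) ℝ)
    (Rbar E : Matrix (Fin s) (Fin s) ℝ)
    (σ : ℝ) (hσ : 0 < σ)
    (hX : ∀ v : EuclideanSpace ℝ (Fin s),
      σ * ‖v‖ ≤ ‖(EuclideanSpace.equiv (Fin m) ℝ).symm (X *ᵥ v)‖)
    (hChol : Rbarᵀ * Rbar = Xᵀ * X + E)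
    (hQR : Qbar * Rbar = X + D)
    (hE : ‖E‖ < σ ^ 2) :
    ‖1 - Qbarᵀ * Qbar‖ ≤ (‖E‖ + 2 * ‖X‖ * ‖D‖ + ‖D‖ ^ 2) / (σ ^ 2 - ‖E‖) := by
  have hc : 0 < σ ^ 2 - ‖E‖ := sub_pos.2 hE
  have hτ : 0 < √(σ ^ 2 - ‖E‖) := Real.sqrt_pos.2 hc
  have hR := sqrt_mul_norm_le_norm_mulVec_of_transpose_mul_self_eq hChol hσ.le hX
  have hS : Rbarᵀ * (1 - Qbarᵀ * Qbar) * Rbar = E - ((X + D)ᵀ * (X + D) - Xᵀ * X) := by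
    rw [← hQR, transpose_mul, eq_sub_of_add_eq' hChol.symm]
    simp only [Matrix.mul_sub, Matrix.sub_mul, Matrix.mul_one, Matrix.mul_assoc]
    abel
  have hN : ‖E - ((X + D)ᵀ * (X + D) - Xᵀ * X)‖ ≤ ‖E‖ + (2 * ‖X‖ * ‖D‖ + ‖D‖ ^ 2) :=
    (norm_sub_le _ _).trans (by gcongr; exact l2_opNorm_transpose_mul_self_add_sub_le X D)
  have hinv := l2_opNorm_nonsing_inv_le_of_mul_norm_le_norm_mulVec hτ hR
  calc ‖1 - Qbarᵀ * Qbar‖ ≤ ‖Rbar⁻¹‖ ^ 2 * ‖Rbarᵀ * (1 - Qbarᵀ * Qbar) * Rbar‖ :=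
        l2_opNorm_le_nonsing_inv_sq_mul_transpose_mul_mul
          (isUnit_det_of_mul_norm_le_norm_mulVec hτ hR) _
    _ ≤ (√(σ ^ 2 - ‖E‖))⁻¹ ^ 2 * (‖E‖ + (2 * ‖X‖ * ‖D‖ + ‖D‖ ^ 2)) := by
        rw [hS]
        exact mul_le_mul (pow_le_pow_left₀ (norm_nonneg _) hinv 2) hN (norm_nonneg _)
          (by positivity)
    _ = (‖E‖ + 2 * ‖X‖ * ‖D‖ + ‖D‖ ^ 2) / (σ ^ 2 - ‖E‖) := by
        rw [inv_pow, Real.sq_sqrt hc.le, ← add_assoc, div_eq_inv_mul]
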